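/- arXiv:1309.0680 — 3 statements merged into one kernel-verified Lean document; each statement's English description precedes it below -/
import Mathlib

section
/- Let G be a Berge graph with a 2-join (X1,X2) with split (X1,X2,A1,B1,A2,B2), and let i ∈ {1,2}. Then every induced path of length at least 2 with both ends in A_i and no interior vertex in A_i ∪ B_i or in the other side beyond what the 2-join forces (i.e., an outgoing path from A_i to A_i) has even length; similarly for B_i. -/
open SimpleGraph

universe u

namespace BSP

variable {V : Type*}

/-- A walk is induced: any two adjacent vertices of its support are consecutive on it. -/
def IsInducedWalk (G : SimpleGraph V) {u v : V} (p : G.Walk u v) : Prop :=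
  ∀ x ∈ p.support, ∀ y ∈ p.support, G.Adj x y → s(x, y) ∈ p.edges

/-- An induced path. -/
def IsInducedPath (G : SimpleGraph V) {u v : V} (p : G.Walk u v) : Prop :=
  p.IsPath ∧ IsInducedWalk G p

/-- An induced cycle. -/
def IsInducedCycle (G : SimpleGraph V) {u : V} (p : G.Walk u u) : Prop :=
  p.IsCycle ∧ IsInducedWalk G p

/-- `G` has an odd hole: an induced odd cycle of length at least 5. -/
def HasOddHole (G : SimpleGraph V) : Prop :=
  ∃ (u : V) (p : G.Walk u u), IsInducedCycle G p ∧ Odd p.length ∧ 5 ≤ p.length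

/-- A graph is Berge if neither it nor its complement has an odd hole. -/
def Berge (G : SimpleGraph V) : Prop := ¬ HasOddHole G ∧ ¬ HasOddHole Gᶜ

/-- `x` is an interior vertex of the walk `p`. -/
def Interior {G : SimpleGraph V} {u v : V} (p : G.Walk u v) (x : V) : Prop :=
  x ∈ p.support ∧ x ≠ u ∧ x ≠ v

/-- A skew partition `(A, B)` of `G`. -/
def IsSkewPartition (G : SimpleGraph V) (A B : Set V) : Prop :=
  A.Nonempty ∧ B.Nonempty ∧ Disjoint A B ∧ A ∪ B = Set.univ ∧
  ¬ (G.induce A).Connected ∧ ¬ ((Gᶜ).induce B).Connected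

/-- A balanced skew partition. -/
def IsBalancedSkewPartition (G : SimpleGraph V) (A B : Set V) : Prop :=
  IsSkewPartition G A B ∧
  (∀ (x y : V) (p : G.Walk x y), IsInducedPath G p → 2 ≤ p.length →
     x ∈ B → y ∈ B → (∀ z, Interior p z → z ∈ A) → Even p.length) ∧
  (∀ (x y : V) (q : (Gᶜ).Walk x y), IsInducedPath Gᶜ q → 2 ≤ q.length →
     x ∈ A → y ∈ A → (∀ z, Interior q z → z ∈ B) → Even q.length)

def HasBalancedSkewPartition (G : SimpleGraph V) : Prop :=
  ∃ A B : Set V, IsBalancedSkewPartition G A B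

def IsSkewCutset (G : SimpleGraph V) (B : Set V) : Prop :=
  IsSkewPartition G Bᶜ B

def IsBalancedSkewCutset (G : SimpleGraph V) (B : Set V) : Prop :=
  IsBalancedSkewPartition G Bᶜ B

/-- `C` is a cutset of `G`. -/
def IsCutset (G : SimpleGraph V) (C : Set V) : Prop :=
  ¬ (G.induce (Cᶜ : Set V)).Connected

/-- A star: a set with a vertex adjacent to all the others in it. -/
def IsStar (G : SimpleGraph V) (B : Set V) : Prop :=
  ∃ x ∈ B, ∀ y ∈ B, y ≠ x → G.Adj x y

def HasStarCutset (G : SimpleGraph V) : Prop :=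
  ∃ B : Set V, IsStar G B ∧ IsCutset G B

/-- A 2-join of `G` with split `(X1, X2, A1, B1, A2, B2)`. -/
def IsTwoJoinSplit (G : SimpleGraph V) (X1 X2 A1 B1 A2 B2 : Set V) : Prop :=
  Disjoint X1 X2 ∧ X1 ∪ X2 = Set.univ ∧
  A1 ⊆ X1 ∧ B1 ⊆ X1 ∧ A2 ⊆ X2 ∧ B2 ⊆ X2 ∧
  Disjoint A1 B1 ∧ Disjoint A2 B2 ∧
  A1.Nonempty ∧ B1.Nonempty ∧ A2.Nonempty ∧ B2.Nonempty ∧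
  (∀ a1 ∈ A1, ∀ a2 ∈ A2, G.Adj a1 a2) ∧
  (∀ b1 ∈ B1, ∀ b2 ∈ B2, G.Adj b1 b2) ∧
  (∀ x ∈ X1, ∀ y ∈ X2, G.Adj x y → (x ∈ A1 ∧ y ∈ A2) ∨ (x ∈ B1 ∧ y ∈ B2))

/-- Reachability inside a set of vertices. -/
def ReachIn (G : SimpleGraph V) (S : Set V) (u v : V) : Prop :=
  ∃ p : G.Walk u v, ∀ x ∈ p.support, x ∈ S

/-- Every component of `G[X]` meets both `A` and `B`. -/
def SideConnected (G : SimpleGraph V) (X A B : Set V) : Prop :=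
  ∀ v ∈ X, (∃ a ∈ A, ReachIn G X v a) ∧ (∃ b ∈ B, ReachIn G X v b)

def IsConnectedTwoJoin (G : SimpleGraph V) (X1 X2 A1 B1 A2 B2 : Set V) : Prop :=
  IsTwoJoinSplit G X1 X2 A1 B1 A2 B2 ∧
  SideConnected G X1 A1 B1 ∧ SideConnected G X2 A2 B2

/-- `X` has at least 3 vertices and is not a path of length 2 from `A` to `B`
with interior in `X \ (A ∪ B)`. -/
def SideSubstantial (G : SimpleGraph V) (X A B : Set V) : Prop :=
  3 ≤ X.ncard ∧
  ¬ ∃ a ∈ A, ∃ b ∈ B, ∃ c ∈ X \ (A ∪ B),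
      X = {a, c, b} ∧ G.Adj a c ∧ G.Adj c b ∧ ¬ G.Adj a b

def IsSubstantialTwoJoin (G : SimpleGraph V) (X1 X2 A1 B1 A2 B2 : Set V) : Prop :=
  IsTwoJoinSplit G X1 X2 A1 B1 A2 B2 ∧
  SideSubstantial G X1 A1 B1 ∧ SideSubstantial G X2 A2 B2

def IsProperTwoJoin (G : SimpleGraph V) (X1 X2 A1 B1 A2 B2 : Set V) : Prop :=
  IsConnectedTwoJoin G X1 X2 A1 B1 A2 B2 ∧
  SideSubstantial G X1 A1 B1 ∧ SideSubstantial G X2 A2 B2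

/-- A degenerate 2-join. -/
def IsDegenerate (G : SimpleGraph V) (X1 X2 A1 B1 A2 B2 : Set V) : Prop :=
  (∃ v ∈ A1, ∀ w ∈ X1 \ A1, ¬ G.Adj v w) ∨
  (∃ v ∈ B1, ∀ w ∈ X1 \ B1, ¬ G.Adj v w) ∨
  (∃ v ∈ A2, ∀ w ∈ X2 \ A2, ¬ G.Adj v w) ∨
  (∃ v ∈ B2, ∀ w ∈ X2 \ B2, ¬ G.Adj v w) ∨
  IsSkewCutset G (A1 ∪ A2) ∨ IsSkewCutset G (B1 ∪ B2) ∨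
  ¬ (SideConnected G X1 A1 B1 ∧ SideConnected G X2 A2 B2) ∨
  (∃ v ∈ A1, ∀ w ∈ B1, G.Adj v w) ∨ (∃ v ∈ B1, ∀ w ∈ A1, G.Adj v w) ∨
  (∃ v ∈ A2, ∀ w ∈ B2, G.Adj v w) ∨ (∃ v ∈ B2, ∀ w ∈ A2, G.Adj v w) ∨
  (∃ v ∈ X1 \ (A1 ∪ B1), ∀ w ∈ A1 ∪ B1, G.Adj v w) ∨
  (∃ v ∈ X2 \ (A2 ∪ B2), ∀ w ∈ A2 ∪ B2, G.Adj v w)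

/-- An induced path from `A` to `B` with no interior vertex in `A ∪ B`. -/
def CrossPath (G : SimpleGraph V) (A B : Set V) {u v : V} (p : G.Walk u v) : Prop :=
  IsInducedPath G p ∧ u ∈ A ∧ v ∈ B ∧ ∀ x, Interior p x → x ∉ A ∪ B

/-- An induced path of length at least 2 with both ends in `S` and no interior vertex in `S`. -/
def OutgoingPath (G : SimpleGraph V) (S : Set V) {u v : V} (p : G.Walk u v) : Prop :=
  IsInducedPath G p ∧ 2 ≤ p.length ∧ u ∈ S ∧ v ∈ S ∧ ∀ x, Interior p x → x ∉ S

def claw : SimpleGraph (Fin 1 ⊕ Fin 3) := completeBipartiteGraph (Fin 1) (Fin 3)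

def diamond : SimpleGraph (Fin 4) := (⊤ : SimpleGraph (Fin 4)).deleteEdges {s(0, 1)}

def ClawFree (G : SimpleGraph V) : Prop := IsEmpty (claw ↪g G)

def DiamondFree (G : SimpleGraph V) : Prop := IsEmpty (diamond ↪g G)

def IsLineGraphOfBipartite {V : Type u} (G : SimpleGraph V) : Prop :=
  ∃ (W : Type u) (H : SimpleGraph W), H.Colorable 2 ∧ Nonempty (G ≃g H.lineGraph)

/-- Double split graph structure. -/
structure IsDoubleSplit (G : SimpleGraph V) (m n : ℕ)
    (a b : Fin m → V) (c d : Fin n → V) : Prop where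
  hm : 2 ≤ m
  hn : 2 ≤ n
  inj : Function.Injective (Sum.elim (Sum.elim a b) (Sum.elim c d))
  cover : Set.range a ∪ Set.range b ∪ Set.range c ∪ Set.range d = Set.univ
  hab : ∀ i, G.Adj (a i) (b i)
  habne : ∀ i i', i ≠ i' →
    ¬ G.Adj (a i) (a i') ∧ ¬ G.Adj (a i) (b i') ∧ ¬ G.Adj (b i) (b i')
  hcd : ∀ j, ¬ G.Adj (c j) (d j)
  hcdall : ∀ j j', j ≠ j' →
    G.Adj (c j) (c j') ∧ G.Adj (c j) (d j') ∧ G.Adj (d j) (d j')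
  cross : ∀ i j,
    (G.Adj (a i) (c j) ∧ G.Adj (b i) (d j) ∧ ¬ G.Adj (a i) (d j) ∧ ¬ G.Adj (b i) (c j)) ∨
    (G.Adj (a i) (d j) ∧ G.Adj (b i) (c j) ∧ ¬ G.Adj (a i) (c j) ∧ ¬ G.Adj (b i) (d j))

/-- Path-double split graph structure. -/
structure IsPathDoubleSplit (G : SimpleGraph V) (m n : ℕ)
    (a b : Fin m → V) (c d : Fin n → V) (E : Set V) : Prop where
  hm : 2 ≤ m
  hn : 2 ≤ n
  inj : Function.Injective (Sum.elim (Sum.elim a b) (Sum.elim c d))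
  notinE : ∀ i, a i ∉ E ∧ b i ∉ E
  notinE' : ∀ j, c j ∉ E ∧ d j ∉ E
  cover : Set.range a ∪ Set.range b ∪ Set.range c ∪ Set.range d ∪ E = Set.univ
  hE : ∀ v ∈ E, (G.neighborSet v).ncard = 2 ∧
    ∃ (i : Fin m) (p : G.Walk (a i) (b i)), IsInducedPath G p ∧ Odd p.length ∧
      (∀ x, Interior p x → x ∈ E) ∧ v ∈ p.support
  hpath : ∀ i, ∃! p : G.Walk (a i) (b i),
    IsInducedPath G p ∧ Odd p.length ∧ (∀ x, Interior p x → x ∈ E)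
  habne : ∀ i i', i ≠ i' →
    ¬ G.Adj (a i) (a i') ∧ ¬ G.Adj (a i) (b i') ∧ ¬ G.Adj (b i) (b i')
  hcd : ∀ j, ¬ G.Adj (c j) (d j)
  hcdall : ∀ j j', j ≠ j' →
    G.Adj (c j) (c j') ∧ G.Adj (c j) (d j') ∧ G.Adj (d j) (d j')
  cross : ∀ i j,
    (G.Adj (a i) (c j) ∧ G.Adj (b i) (d j) ∧ ¬ G.Adj (a i) (d j) ∧ ¬ G.Adj (b i) (c j)) ∨
    (G.Adj (a i) (d j) ∧ G.Adj (b i) (c j) ∧ ¬ G.Adj (a i) (c j) ∧ ¬ G.Adj (b i) (d j))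

/-- Path-cobipartite graph. -/
def IsPathCobipartite (G : SimpleGraph V) : Prop :=
  Berge G ∧ ∃ A B P : Set V,
    Disjoint A B ∧ Disjoint A P ∧ Disjoint B P ∧ A ∪ B ∪ P = Set.univ ∧
    A.Nonempty ∧ B.Nonempty ∧ G.IsClique A ∧ G.IsClique B ∧
    ∀ v ∈ P, (G.neighborSet v).ncard = 2 ∧
      ∃ a ∈ A, ∃ b ∈ B, ∃ p : G.Walk a b, IsInducedPath G p ∧ Odd p.length ∧
        Interior p v ∧ (∀ x, Interior p x → x ∈ P) ∧
        (∀ w, G.Adj a w → w ∈ A ∪ P) ∧ (∀ w, G.Adj b w → w ∈ B ∪ P) ∧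
        (∀ (a' b' : V), a' ∈ A → b' ∈ B → ∀ p' : G.Walk a' b',
          IsInducedPath G p' → Odd p'.length → Interior p' v →
          (∀ x, Interior p' x → x ∈ P) →
          {x | x ∈ p'.support} = {x | x ∈ p.support})

/-- `X` induces a path of `G` with one end in `A`, the other in `B` and interior
outside `A ∪ B`. -/
def PathSideOn (G : SimpleGraph V) (X A B : Set V) : Prop :=
  ∃ a ∈ A, ∃ b ∈ B, ∃ p : G.Walk a b, IsInducedPath G p ∧
    {x | x ∈ p.support} = X ∧ ∀ x, Interior p x → x ∉ A ∪ B

/-- The block of a 2-join: keep the side `X` (with attachments `A`, `B`) and replace the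
other side by a path `p_0, …, p_k`, `p_0` complete to `A` and `p_k` complete to `B`. -/
def blockGraph (G : SimpleGraph V) (X A B : Set V) (k : ℕ) :
    SimpleGraph (↥X ⊕ Fin (k + 1)) where
  Adj x y :=
    match x, y with
    | Sum.inl u, Sum.inl v => G.Adj u v
    | Sum.inl u, Sum.inr i => ((i : ℕ) = 0 ∧ (u : V) ∈ A) ∨ ((i : ℕ) = k ∧ (u : V) ∈ B)
    | Sum.inr i, Sum.inl u => ((i : ℕ) = 0 ∧ (u : V) ∈ A) ∨ ((i : ℕ) = k ∧ (u : V) ∈ B)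
    | Sum.inr i, Sum.inr j => (i : ℕ) + 1 = (j : ℕ) ∨ (j : ℕ) + 1 = (i : ℕ)
  symm := by
    constructor
    rintro (u | i) (v | j) h
    · exact h.symm
    · exact h
    · exact h
    · omega
  loopless := by
    constructor
    rintro (u | i) h
    · exact G.irrefl h
    · omega

/-- The graph `G'` obtained from a Bienstock graph `G` by adding two vertices
(`Sum.inr false` and `Sum.inr true`), each adjacent exactly to `u` and `s`. -/
def bienstockExt (G : SimpleGraph V) (u s : V) : SimpleGraph (V ⊕ Bool) where
  Adj x y :=
    match x, y with
    | Sum.inl p, Sum.inl q => G.Adj p q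
    | Sum.inl p, Sum.inr _ => p = u ∨ p = s
    | Sum.inr _, Sum.inl q => q = u ∨ q = s
    | Sum.inr _, Sum.inr _ => False
  symm := by
    constructor
    rintro (p | i) (q | j) h
    · exact h.symm
    · exact h
    · exact h
    · exact h
  loopless := by
    constructor
    rintro (p | i) h
    · exact G.irrefl h
    · exact h

end BSP

/-! Let `p` be an outgoing path from `A1` and `a ∈ A2`; `a` is adjacent to both ends of `p`.
A vertex of `A2` on `p` would also be adjacent to both ends, forcing length 2. Otherwise every
edge of `p` between the sides runs from `B1` to `B2`, and as `B1` is complete to `B2` the induced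
path `p` has at most one vertex `w` in `X2`. So the neighbours of `a` on `p` are its ends and
possibly `w`; closing `p`, or its two halves at `w`, through `a` gives holes, and these are even
since `G` has no odd hole. The other three attachment sets follow by symmetry. -/

namespace SimpleGraph.Walk

variable {V : Type*} {G : SimpleGraph V}

theorem two_le_length_of_not_adj {u v : V} (p : G.Walk u v) (hne : u ≠ v) (hadj : ¬ G.Adj u v) :
    2 ≤ p.length := by
  by_contra! h
  interval_cases hl : p.length
  · exact hne (eq_of_length_eq_zero hl)
  · exact hadj (adj_of_length_eq_one hl)

theorem IsPath.ne_of_length_pos {u v : V} {p : G.Walk u v} (hp : p.IsPath) (hlen : 0 < p.length) :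
    u ≠ v := by
  rintro rfl
  have := length_eq_zero_iff.mpr (isPath_iff_nil.mp hp)
  omega

end SimpleGraph.Walk

namespace BSP

open Walk

variable {V : Type*} {G : SimpleGraph V}

section InducedPath

theorem IsInducedPath.reverse {u v : V} {p : G.Walk u v} (hp : IsInducedPath G p) :
    IsInducedPath G p.reverse := by
  refine ⟨hp.1.reverse, fun x hx y hy hxy => ?_⟩
  rw [support_reverse, List.mem_reverse] at hx hy
  rw [edges_reverse, List.mem_reverse]
  exact hp.2 x hx y hy hxy

theorem IsInducedPath.of_append_left {u v w : V} {p : G.Walk u v} {q : G.Walk v w}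
    (hpq : IsInducedPath G (p.append q)) : IsInducedPath G p := by
  refine ⟨hpq.1.of_append_left, fun x hx y hy hxy => ?_⟩
  have hmid : ∀ z ∈ p.support, z ∈ q.support → z = v := fun z hzp hzq =>
    by_contra fun hzv => hpq.1.ne_of_mem_support_of_append hzv hzp hzq rfl
  have he := hpq.2 x ((mem_support_append_iff p q).2 (.inl hx)) y
    ((mem_support_append_iff p q).2 (.inl hy)) hxy
  rw [edges_append, List.mem_append] at he
  refine he.resolve_right fun he => hxy.ne ?_
  rw [hmid x hx (fst_mem_support_of_mem_edges q he), hmid y hy (snd_mem_support_of_mem_edges q he)]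

theorem IsInducedPath.of_append_right {u v w : V} {p : G.Walk u v} {q : G.Walk v w}
    (hpq : IsInducedPath G (p.append q)) : IsInducedPath G q := by
  have hrev := hpq.reverse
  rw [reverse_append] at hrev
  simpa using hrev.of_append_left.reverse

theorem IsInducedPath.of_cons {u w v : V} {h : G.Adj u w} {q : G.Walk w v}
    (hp : IsInducedPath G (cons h q)) : IsInducedPath G q :=
  IsInducedPath.of_append_right (p := cons h nil) hp

theorem IsInducedPath.eq_of_adj_of_cons {u w v x : V} {h : G.Adj u w} {q : G.Walk w v}
    (hp : IsInducedPath G (cons h q)) (hx : x ∈ q.support) (hux : G.Adj u x) : x = w := by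
  have he := hp.2 u (start_mem_support _) x (List.mem_cons_of_mem _ hx) hux
  rw [edges_cons, List.mem_cons] at he
  rcases he with he | he
  · exact Sym2.congr_right.mp he
  · exact absurd (fst_mem_support_of_mem_edges q he) ((cons_isPath_iff h q).mp hp.1).2

theorem IsInducedPath.length_eq_one_of_adj {u v : V} {p : G.Walk u v} (hp : IsInducedPath G p)
    (huv : G.Adj u v) : p.length = 1 := by
  cases p with
  | nil => exact absurd huv (G.irrefl)
  | cons h q =>
    obtain rfl := hp.eq_of_adj_of_cons q.end_mem_support huv
    simp [isPath_iff_nil.mp hp.of_cons.1]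

theorem IsInducedPath.length_eq_two_of_adj_of_adj {u v x : V} {p : G.Walk u v}
    (hp : IsInducedPath G p) (hx : x ∈ p.support) (hux : G.Adj u x) (hxv : G.Adj x v) :
    p.length = 2 := by
  cases p with
  | nil =>
    rw [support_nil, List.mem_singleton] at hx
    exact absurd (hx ▸ hux) G.irrefl
  | cons h q =>
    have hxq : x ∈ q.support := (List.mem_cons.mp hx).resolve_left hux.ne'
    obtain rfl := hp.eq_of_adj_of_cons hxq hux
    rw [length_cons, hp.of_cons.length_eq_one_of_adj hxv]

theorem IsInducedPath.isInducedCycle_cons_concat {u v a : V} {p : G.Walk u v}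
    (hp : IsInducedPath G p) (huv : u ≠ v) (ha : a ∉ p.support) (hau : G.Adj a u)
    (hva : G.Adj v a) (hnbr : ∀ x ∈ p.support, G.Adj a x → x = u ∨ x = v) :
    IsInducedCycle G (cons hau (p.concat hva)) := by
  refine ⟨(cons_isCycle_iff _ _).2 ⟨hp.1.concat ha hva, fun he => ?_⟩, ?_⟩
  · rw [edges_concat, List.concat_eq_append, List.mem_append, List.mem_singleton] at he
    rcases he with he | he
    · exact ha (fst_mem_support_of_mem_edges p he)
    · rcases Sym2.eq_iff.mp he with ⟨-, rfl⟩ | ⟨-, rfl⟩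
      · exact hau.ne rfl
      · exact huv rfl
  · have hsupp : ∀ z, z ∈ (cons hau (p.concat hva)).support ↔ z = a ∨ z ∈ p.support := by
      simp only [support_cons, support_concat, List.mem_cons, List.mem_append, List.not_mem_nil,
        or_false]
      tauto
    intro x hx y hy hxy
    rw [hsupp] at hx hy
    rcases hx with rfl | hx <;> rcases hy with rfl | hy
    · exact absurd hxy G.irrefl
    · rcases hnbr y hy hxy with rfl | rfl <;> simp [Sym2.eq_swap]
    · rcases hnbr x hx hxy.symm with rfl | rfl <;> simp [Sym2.eq_swap]
    · simp [hp.2 x hx y hy hxy]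

theorem IsInducedPath.even_length_of_apex (hG : ¬ HasOddHole G) {u v a : V} {p : G.Walk u v}
    (hp : IsInducedPath G p) (hlen : 2 ≤ p.length) (ha : a ∉ p.support) (hau : G.Adj a u)
    (hva : G.Adj v a) (hnbr : ∀ x ∈ p.support, G.Adj a x → x = u ∨ x = v) :
    Even p.length := by
  by_contra hodd
  rw [Nat.not_even_iff_odd] at hodd
  have hcycle := hp.isInducedCycle_cons_concat (hp.1.ne_of_length_pos (by omega)) ha hau hva hnbr
  have hcycle_len : (cons hau (p.concat hva)).length = p.length + 2 := by simp [length_concat]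
  refine hG ⟨a, _, hcycle, hcycle_len ▸ hodd.add_even even_two, ?_⟩
  obtain ⟨k, hk⟩ := hodd
  omega

theorem IsInducedPath.even_length_append_of_apex (hG : ¬ HasOddHole G) {u w v a : V}
    {q : G.Walk u w} {r : G.Walk w v} (hp : IsInducedPath G (q.append r)) (hq : 2 ≤ q.length)
    (hr : 2 ≤ r.length) (ha : a ∉ (q.append r).support) (hau : G.Adj a u) (haw : G.Adj a w)
    (hva : G.Adj v a) (hnbr : ∀ x ∈ (q.append r).support, G.Adj a x → x = u ∨ x = w ∨ x = v) :
    Even (q.append r).length := by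
  have hv : v ∉ q.support := fun hvq => hp.1.ne_of_mem_support_of_append
    (hp.1.of_append_right.ne_of_length_pos (by omega)).symm hvq r.end_mem_support rfl
  have hu : u ∉ r.support := fun hur => hp.1.ne_of_mem_support_of_append
    (hp.1.of_append_left.ne_of_length_pos (by omega)) q.start_mem_support hur rfl
  rw [length_append]
  refine Even.add (hp.of_append_left.even_length_of_apex hG hq ?_ hau haw.symm ?_)
    (hp.of_append_right.even_length_of_apex hG hr ?_ haw hva ?_)
  · exact fun haq => ha ((mem_support_append_iff q r).2 (.inl haq))
  · intro x hx hax
    rcases hnbr x ((mem_support_append_iff q r).2 (.inl hx)) hax with h | h | rfl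
    exacts [.inl h, .inr h, absurd hx hv]
  · exact fun har => ha ((mem_support_append_iff q r).2 (.inr har))
  · intro x hx hax
    rcases hnbr x ((mem_support_append_iff q r).2 (.inr hx)) hax with rfl | h | h
    exacts [absurd hx hu, .inl h, .inr h]

theorem IsInducedPath.subsingleton_inter_of_crossing {Y B C : Set V}
    (hBC : ∀ b ∈ B, ∀ c ∈ C, G.Adj b c) {u v : V} {p : G.Walk u v} (hp : IsInducedPath G p)
    (hu : u ∉ Y) (hv : v ∉ Y)
    (hcross : ∀ x ∈ p.support, ∀ y ∈ p.support, x ∉ Y → y ∈ Y → G.Adj x y → x ∈ B ∧ y ∈ C) :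
    {x | x ∈ p.support ∧ x ∈ Y}.Subsingleton := by
  induction p with
  | nil =>
    rintro x ⟨hx, hxY⟩
    rw [support_nil, List.mem_singleton] at hx
    exact absurd (hx ▸ hxY) hu
  | @cons u w v h q ih =>
    have hsupp : ∀ x ∈ (cons h q).support, x ∈ Y → x ∈ q.support := fun x hx hxY =>
      (List.mem_cons.mp hx).resolve_left (by rintro rfl; exact hu hxY)
    by_cases hw : w ∈ Y
    -- `u ∈ B`, so a later exit of `p` from `Y`, through a vertex of `C`, would be a chord at `u`
    · refine Set.subsingleton_of_forall_eq w fun t ⟨ht, htY⟩ => by_contra fun htw => ?_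
      obtain ⟨q₁, q₂, -, -, rfl⟩ := hp.of_cons.1.mem_support_iff_exists_append.mp (hsupp t ht htY)
      obtain ⟨d, hd, hdY, hdY'⟩ := q₂.exists_boundary_dart Y htY hv
      have hdq₂ := q₂.dart_fst_mem_support_of_mem_darts hd
      have hdq := (mem_support_append_iff q₁ q₂).2 (.inr hdq₂)
      have huB := (hcross u (start_mem_support _) w (List.mem_cons_of_mem _ (start_mem_support _))
        hu hw h).1
      have hdC := (hcross d.snd (List.mem_cons_of_mem _ ((mem_support_append_iff q₁ q₂).2
        (.inr (q₂.dart_snd_mem_support_of_mem_darts hd)))) d.fst (List.mem_cons_of_mem _ hdq)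
        hdY' hdY d.adj.symm).2
      have hdw := hp.eq_of_adj_of_cons hdq (hBC u huB d.fst hdC)
      rw [hdw] at hdq₂
      exact hp.of_cons.1.ne_of_mem_support_of_append (Ne.symm htw) q₁.start_mem_support hdq₂ rfl
    · refine (ih hp.of_cons hw hv fun x hx y hy =>
        hcross x (List.mem_cons_of_mem _ hx) y (List.mem_cons_of_mem _ hy)).anti ?_
      exact fun x ⟨hx, hxY⟩ => ⟨hsupp x hx hxY, hxY⟩

end InducedPath

namespace IsTwoJoinSplit

variable {X1 X2 A1 B1 A2 B2 : Set V}

theorem swap_attachments (hJ : IsTwoJoinSplit G X1 X2 A1 B1 A2 B2) :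
    IsTwoJoinSplit G X1 X2 B1 A1 B2 A2 := by
  obtain ⟨h1, h2, h3, h4, h5, h6, h7, h8, h9, h10, h11, h12, h13, h14, h15⟩ := hJ
  exact ⟨h1, h2, h4, h3, h6, h5, h7.symm, h8.symm, h10, h9, h12, h11, h14, h13,
    fun x hx y hy hxy => (h15 x hx y hy hxy).symm⟩

theorem swap_sides (hJ : IsTwoJoinSplit G X1 X2 A1 B1 A2 B2) :
    IsTwoJoinSplit G X2 X1 A2 B2 A1 B1 := by
  obtain ⟨h1, h2, h3, h4, h5, h6, h7, h8, h9, h10, h11, h12, h13, h14, h15⟩ := hJ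
  refine ⟨h1.symm, Set.union_comm X1 X2 ▸ h2, h5, h6, h3, h4, h8, h7, h11, h12, h9, h10,
    fun a2 ha2 a1 ha1 => (h13 a1 ha1 a2 ha2).symm, fun b2 hb2 b1 hb1 => (h14 b1 hb1 b2 hb2).symm,
    fun x hx y hy hxy => ?_⟩
  rcases h15 y hy x hx hxy.symm with ⟨hy', hx'⟩ | ⟨hy', hx'⟩
  exacts [.inl ⟨hx', hy'⟩, .inr ⟨hx', hy'⟩]

theorem mem_right_of_not_mem_left (hJ : IsTwoJoinSplit G X1 X2 A1 B1 A2 B2) {x : V}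
    (hx : x ∉ X1) : x ∈ X2 :=
  ((Set.mem_union x X1 X2).mp (hJ.2.1 ▸ Set.mem_univ x)).resolve_left hx

theorem mem_left_of_not_mem_right (hJ : IsTwoJoinSplit G X1 X2 A1 B1 A2 B2) {x : V}
    (hx : x ∉ X2) : x ∈ X1 :=
  hJ.swap_sides.mem_right_of_not_mem_left hx

theorem subsingleton_inter_right (hJ : IsTwoJoinSplit G X1 X2 A1 B1 A2 B2) {u v : V}
    {p : G.Walk u v} (hp : IsInducedPath G p) (hu : u ∈ X1) (hv : v ∈ X1)
    (hpA2 : ∀ x ∈ p.support, x ∉ A2) : {x | x ∈ p.support ∧ x ∈ X2}.Subsingleton := by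
  obtain ⟨hdisj, -, -, -, -, -, -, -, -, -, -, -, -, hBB, hcross⟩ := id hJ
  refine hp.subsingleton_inter_of_crossing hBB (Set.disjoint_left.mp hdisj hu)
    (Set.disjoint_left.mp hdisj hv) fun x _ y hy hxX2 hyX2 hxy => ?_
  exact (hcross x (hJ.mem_left_of_not_mem_right hxX2) y hyX2 hxy).resolve_left
    fun h => hpA2 y hy h.2

theorem mem_A1_of_adj_of_mem_A2 (hJ : IsTwoJoinSplit G X1 X2 A1 B1 A2 B2) {a x : V}
    (ha : a ∈ A2) (hx : x ∈ X1) (hax : G.Adj a x) : x ∈ A1 := by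
  obtain ⟨-, -, -, -, hA2, -, -, hAB2, -, -, -, -, -, -, hcross⟩ := hJ
  exact ((hcross x hx a (hA2 ha) hax.symm).resolve_right
    fun h => Set.disjoint_left.mp hAB2 ha h.2).1

theorem not_adj_of_mem_A1_of_not_mem_A2 (hJ : IsTwoJoinSplit G X1 X2 A1 B1 A2 B2) {y w : V}
    (hy : y ∈ A1) (hw : w ∈ X2) (hwA2 : w ∉ A2) : ¬ G.Adj y w := by
  obtain ⟨-, -, hA1, -, -, -, hAB1, -, -, -, -, -, -, -, hcross⟩ := hJ
  intro hyw
  rcases hcross y (hA1 hy) w hw hyw with h | h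
  exacts [hwA2 h.2, Set.disjoint_left.mp hAB1 hy h.1]

theorem even_length_of_outgoingPath_A1 (hG : ¬ HasOddHole G)
    (hJ : IsTwoJoinSplit G X1 X2 A1 B1 A2 B2) {u v : V} {p : G.Walk u v}
    (hp : OutgoingPath G A1 p) : Even p.length := by
  obtain ⟨hdisj, -, hA1, -, -, -, -, -, -, -, ⟨a, ha⟩, -, hAA, -, -⟩ := id hJ
  obtain ⟨hind, hlen, hu, hv, hint⟩ := hp
  by_cases hpA2 : ∃ x ∈ p.support, x ∈ A2
  · obtain ⟨x, hx, hxA2⟩ := hpA2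
    rw [hind.length_eq_two_of_adj_of_adj hx (hAA u hu x hxA2) (hAA v hv x hxA2).symm]
    exact even_two
  push Not at hpA2
  have ha_p : a ∉ p.support := fun h => hpA2 a h ha
  have hnbr_left : ∀ x ∈ p.support, x ∈ X1 → G.Adj a x → x = u ∨ x = v := by
    intro x hx hxX1 hax
    by_contra! hne
    exact hint x ⟨hx, hne.1, hne.2⟩ (hJ.mem_A1_of_adj_of_mem_A2 ha hxX1 hax)
  by_cases hw : ∃ w ∈ p.support, w ∈ X2 ∧ G.Adj a w
  · obtain ⟨w, hw, hwX2, haw⟩ := hw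
    have hnbr : ∀ x ∈ p.support, G.Adj a x → x = u ∨ x = w ∨ x = v := by
      intro x hx hax
      by_cases hxX1 : x ∈ X1
      · exact (hnbr_left x hx hxX1 hax).imp_right .inr
      · exact .inr (.inl (hJ.subsingleton_inter_right hind (hA1 hu) (hA1 hv) hpA2
          ⟨hx, hJ.mem_right_of_not_mem_left hxX1⟩ ⟨hw, hwX2⟩))
    have hne : ∀ y ∈ A1, y ≠ w := fun y hy h =>
      Set.disjoint_left.mp hdisj (hA1 hy) (h ▸ hwX2)
    have hnadj : ∀ y ∈ A1, ¬ G.Adj y w := fun y hy =>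
      hJ.not_adj_of_mem_A1_of_not_mem_A2 hy hwX2 (hpA2 w hw)
    obtain ⟨q, r, -, -, rfl⟩ := hind.1.mem_support_iff_exists_append.mp hw
    exact hind.even_length_append_of_apex hG
      (q.two_le_length_of_not_adj (hne u hu) (hnadj u hu))
      (r.two_le_length_of_not_adj (hne v hv).symm fun h => hnadj v hv h.symm)
      ha_p (hAA u hu a ha).symm haw (hAA v hv a ha) hnbr
  · push Not at hw
    refine hind.even_length_of_apex hG hlen ha_p (hAA u hu a ha).symm (hAA v hv a ha)
      fun x hx hax => hnbr_left x hx ?_ hax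
    by_contra hxX1
    exact hw x hx (hJ.mem_right_of_not_mem_left hxX1) hax

end IsTwoJoinSplit

end BSP

/-- In a Berge graph with a 2-join, every outgoing path from `A_i` to `A_i`
(resp. `B_i` to `B_i`) has even length. -/
theorem two_join_outgoing_path_even {V : Type*} (G : SimpleGraph V)
    (X1 X2 A1 B1 A2 B2 : Set V)
    (hBerge : BSP.Berge G)
    (hJ : BSP.IsTwoJoinSplit G X1 X2 A1 B1 A2 B2) :
    ∀ S : Set V, (S = A1 ∨ S = B1 ∨ S = A2 ∨ S = B2) →
      ∀ (u v : V) (p : G.Walk u v), BSP.OutgoingPath G S p → Even p.length := by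
  rintro S (rfl | rfl | rfl | rfl) u v p hp
  · exact hJ.even_length_of_outgoingPath_A1 hBerge.1 hp
  · exact hJ.swap_attachments.even_length_of_outgoingPath_A1 hBerge.1 hp
  · exact hJ.swap_sides.even_length_of_outgoingPath_A1 hBerge.1 hp
  · exact hJ.swap_sides.swap_attachments.even_length_of_outgoingPath_A1 hBerge.1 hp
end

section
/- A graph G is the line graph of some bipartite graph if and only if G contains no odd hole (induced odd cycle of length at least 5), no induced claw K_{1,3}, and no induced diamond (K_4 minus an edge). -/
open SimpleGraph

universe u

/-! A line graph has no claw, since the two ends of an edge cannot meet three pairwise disjoint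
edges, and, over a triangle-free root, no diamond, since three pairwise meeting edges then share
an end. Over a bipartite root, the ends shared by consecutive edges of an induced cycle of length
at least four alternate in colour, so the cycle is even.

Conversely, in a claw-free diamond-free graph `G` every edge `xy` lies in exactly one maximal
clique `{x, y} ∪ (N(x) ∩ N(y))`, and every vertex lies in at most two of these edge cliques.
The root graph has the edge cliques, together with private padding vertices, as its vertices,
and one edge per vertex of `G`, joining the cliques that contain it. An odd cycle of the root
graph is a triangle, which would put the three corresponding vertices of `G` into one edge
clique, or has length at least five, and then its edges form an odd hole of `G`. -/

lemma Sym2.eq_or_eq_or_eq_of_mem {α : Type*} {e : Sym2 α} {x y z : α} (hx : x ∈ e)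
    (hy : y ∈ e) (hz : z ∈ e) : x = y ∨ x = z ∨ y = z := by
  induction e using Sym2.ind with
  | _ a b =>
    simp only [Sym2.mem_iff] at hx hy hz
    grind

lemma Fin.add_one_add_one_ne_self {n : ℕ} (k : Fin (n + 3)) : k + 1 + 1 ≠ k := by
  rw [add_assoc, Ne, add_eq_left]
  simp [Fin.ext_iff, Fin.val_add, Nat.mod_eq_of_lt]

namespace SimpleGraph

variable {V W : Type*} {G : SimpleGraph V} {H : SimpleGraph W}

lemma cycleGraph_adj_iff_exists {n : ℕ} {i j : Fin (n + 2)} :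
    (cycleGraph (n + 2)).Adj i j ↔ ∃ k, s(i, j) = s(k, k + 1) := by
  rw [cycleGraph_adj, sub_eq_iff_eq_add', sub_eq_iff_eq_add']
  constructor
  · rintro (rfl | rfl)
    · exact ⟨j, Sym2.eq_swap⟩
    · exact ⟨i, rfl⟩
  · rintro ⟨k, hk⟩
    rcases Sym2.eq_iff.1 hk with ⟨rfl, rfl⟩ | ⟨rfl, rfl⟩
    · exact Or.inr rfl
    · exact Or.inl rfl

lemma cycleGraph.getVert_cycle_eq_neg (n : ℕ) (k : Fin (n + 3)) :
    (cycleGraph.cycle n).getVert k = -k := by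
  rw [cycleGraph.getVert_cycle (by omega), Fin.ext_iff, Fin.val_neg']

lemma cycleGraph_isIndContained_lineGraph (n : ℕ) :
    cycleGraph (n + 3) ⊴ (cycleGraph (n + 3)).lineGraph := by
  have hadj (k : Fin (n + 3)) : s(k, k + 1) ∈ (cycleGraph (n + 3)).edgeSet :=
    cycleGraph_adj.2 (Or.inr (add_sub_cancel_left k 1))
  have hne₁ (k : Fin (n + 3)) : k + 1 ≠ k := by
    rw [Ne, add_eq_left]
    exact one_ne_zero
  have hinj : Function.Injective fun k : Fin (n + 3) => s(k, k + 1) := by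
    intro a b h
    rcases Sym2.eq_iff.1 h with ⟨h, -⟩ | ⟨rfl, h⟩
    · exact h
    · exact absurd h (Fin.add_one_add_one_ne_self b)
  refine ⟨⟨⟨fun k => ⟨s(k, k + 1), hadj k⟩, fun a b h => hinj (congrArg Subtype.val h)⟩, ?_⟩⟩
  intro i j
  change (lineGraph _).Adj ⟨s(i, i + 1), hadj i⟩ ⟨s(j, j + 1), hadj j⟩ ↔ _
  rw [lineGraph_adj_iff_exists, cycleGraph_adj, sub_eq_iff_eq_add', sub_eq_iff_eq_add']
  simp only [ne_eq, Subtype.mk.injEq, hinj.eq_iff, Sym2.mem_iff]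
  constructor
  · rintro ⟨hij, v, hvi, hvj⟩
    rcases hvi with rfl | rfl <;> rcases hvj with h | h
    · exact absurd h hij
    · exact Or.inl h
    · exact Or.inr h.symm
    · exact absurd (add_right_cancel h) hij
  · rintro (rfl | rfl)
    · exact ⟨hne₁ j, j + 1, Or.inl rfl, Or.inr rfl⟩
    · exact ⟨(hne₁ i).symm, i + 1, Or.inr rfl, Or.inl rfl⟩

lemma even_of_forall_ne_add_one {n : ℕ} (t : Fin (n + 3) → Bool) (ht : ∀ k, t k ≠ t (k + 1)) :
    Even (n + 3) := by
  let c : (cycleGraph (n + 3)).Coloring Bool := Coloring.mk t fun {i j} hij => by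
    rcases cycleGraph_adj.1 hij with h | h <;> rw [sub_eq_iff_eq_add'] at h <;> subst h
    exacts [(ht j).symm, ht i]
  simpa [cycleGraph.length_cycle] using (c.even_length_iff_congr (cycleGraph.cycle n)).2 Iff.rfl

namespace Walk

lemma exists_append_loop_of_not_isPath {u v : V} (p : G.Walk u v) (hp : ¬ p.IsPath) :
    ∃ (x : V) (a : G.Walk u x) (c : G.Walk x x) (b : G.Walk x v),
      ¬ c.Nil ∧ p.length = a.length + c.length + b.length := by
  classical
  induction p with
  | nil => exact absurd IsPath.nil hp
  | @cons u w v h q ih =>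
    by_cases hq : q.IsPath
    · have hu : u ∈ q.support := by simpa [cons_isPath_iff, hq] using hp
      obtain ⟨q₁, q₂, rfl⟩ := mem_support_iff_exists_append.1 hu
      exact ⟨u, nil, cons h q₁, q₂, not_nil_cons, by simp; omega⟩
    · obtain ⟨x, a, c, b, hc, hlen⟩ := ih hq
      exact ⟨x, cons h a, c, b, hc, by simp [hlen]; omega⟩

lemma exists_isCycle_odd_length {u : V} (p : G.Walk u u) (hp : Odd p.length) :
    ∃ (v : V) (c : G.Walk v v), c.IsCycle ∧ Odd c.length := by
  induction hn : p.length using Nat.strong_induction_on generalizing u with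
  | _ n ih =>
  cases p with
  | nil => simp at hp
  | @cons _ v _ h q =>
    by_cases hq : q.IsPath
    · refine ⟨u, cons h q, (cons_isCycle_iff q h).2 ⟨hq, fun he => ?_⟩, hp⟩
      have := hq.length_eq_one_of_mem_edges (Sym2.eq_swap ▸ he)
      simp [this, Nat.odd_iff] at hp
    · obtain ⟨x, a, c, b, hc, hlen⟩ := exists_append_loop_of_not_isPath q hq
      have hc₀ := not_nil_iff_lt_length.1 hc
      have hsplit : (cons h (a.append b)).length + c.length = n := by simp [← hn, hlen]; omega
      rcases Nat.even_or_odd c.length with hce | hco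
      · refine ih (cons h (a.append b)).length (by omega) _ ((Nat.odd_add.1 ?_).2 hce) rfl
        rwa [hsplit, ← hn]
      · exact ih _ (by simp at hsplit; omega) c hco rfl

lemma mem_edges_iff_exists_getVert {u v : V} {p : G.Walk u v} {e : Sym2 V} :
    e ∈ p.edges ↔ ∃ k < p.length, e = s(p.getVert k, p.getVert (k + 1)) := by
  simp [List.mem_iff_getElem, getElem_edges, eq_comm]

lemma getVert_fin_add_one {n : ℕ} {u : V} {p : G.Walk u u} (hlen : p.length = n + 1)
    (k : Fin (n + 1)) : p.getVert ↑(k + 1) = p.getVert (k + 1) := by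
  rcases Fin.eq_castSucc_or_eq_last k with ⟨k, rfl⟩ | rfl
  · simp
  · simp [← hlen]

lemma IsCycle.mem_edges_iff_cycleGraph_adj {n : ℕ} {u : V} {p : G.Walk u u} (hp : p.IsCycle)
    (hlen : p.length = n + 3) (i j : Fin (n + 3)) :
    s(p.getVert i, p.getVert j) ∈ p.edges ↔ (cycleGraph (n + 3)).Adj i j := by
  have hinj : Function.Injective fun k : Fin (n + 3) => p.getVert k :=
    fun a b h => Fin.ext (hp.getVert_injOn' (by simp; omega) (by simp; omega) h)
  rw [cycleGraph_adj_iff_exists, mem_edges_iff_exists_getVert]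
  constructor
  · rintro ⟨k, hk, he⟩
    refine ⟨⟨k, by omega⟩, Sym2.map.injective hinj ?_⟩
    simpa [getVert_fin_add_one hlen] using he
  · rintro ⟨k, hk⟩
    refine ⟨k, by omega, ?_⟩
    rw [← getVert_fin_add_one hlen]
    simpa using congrArg (Sym2.map fun k : Fin (n + 3) => p.getVert k) hk

end Walk

lemma nonempty_iso_lineGraph_fromEdgeSet {f : V → Sym2 W} (hdiag : ∀ x, ¬ (f x).IsDiag)
    (hinj : Function.Injective f) (hadj : ∀ x y, x ≠ y → (G.Adj x y ↔ ∃ w, w ∈ f x ∧ w ∈ f y)) :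
    Nonempty (G ≃g (fromEdgeSet (Set.range f)).lineGraph) := by
  have hmem (x : V) : f x ∈ (fromEdgeSet (Set.range f)).edgeSet := by
    rw [edgeSet_fromEdgeSet]
    exact ⟨⟨x, rfl⟩, hdiag x⟩
  refine ⟨⟨Equiv.ofBijective (fun x => ⟨f x, hmem x⟩)
    ⟨fun x y h => hinj (congrArg Subtype.val h), ?_⟩, ?_⟩⟩
  · rintro ⟨e, he⟩
    rw [edgeSet_fromEdgeSet] at he
    obtain ⟨⟨x, rfl⟩, -⟩ := he
    exact ⟨x, rfl⟩
  · intro x y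
    change (lineGraph _).Adj ⟨f x, hmem x⟩ ⟨f y, hmem y⟩ ↔ G.Adj x y
    rw [lineGraph_adj_iff_exists]
    by_cases hxy : x = y
    · simp [hxy]
    · simp [hxy, hinj.eq_iff, hadj x y hxy]

lemma exists_mem_of_lineGraph_adj_of_adj_of_adj (hH : H.CliqueFree 3) {e₁ e₂ e₃ : H.edgeSet}
    (h₁₂ : H.lineGraph.Adj e₁ e₂) (h₁₃ : H.lineGraph.Adj e₁ e₃) (h₂₃ : H.lineGraph.Adj e₂ e₃) :
    ∃ v, v ∈ (e₁ : Sym2 W) ∧ v ∈ (e₂ : Sym2 W) ∧ v ∈ (e₃ : Sym2 W) := by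
  classical
  obtain ⟨-, x, hx₁, hx₂⟩ := lineGraph_adj_iff_exists.1 h₁₂
  obtain ⟨-, y, hy₁, hy₃⟩ := lineGraph_adj_iff_exists.1 h₁₃
  obtain ⟨-, z, hz₂, hz₃⟩ := lineGraph_adj_iff_exists.1 h₂₃
  by_cases hxy : x = y
  · exact ⟨x, hx₁, hx₂, hxy ▸ hy₃⟩
  by_cases hxz : x = z
  · exact ⟨x, hx₁, hx₂, hxz ▸ hz₃⟩
  by_cases hyz : y = z
  · exact ⟨y, hy₁, hyz ▸ hz₂, hy₃⟩
  exact absurd (is3Clique_triple_iff.2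
    ⟨adj_iff_exists_edge.2 ⟨hxy, _, e₁.2, hx₁, hy₁⟩, adj_iff_exists_edge.2 ⟨hxz, _, e₂.2, hx₂, hz₂⟩,
      adj_iff_exists_edge.2 ⟨hyz, _, e₃.2, hy₃, hz₃⟩⟩) (hH _)

lemma Coloring.even_of_cycleGraph_embedding_lineGraph {n : ℕ} (c : H.Coloring Bool)
    (f : cycleGraph (n + 4) ↪g H.lineGraph) : Even (n + 4) := by
  have hshare (k : Fin (n + 4)) : ∃ v, v ∈ (f k : Sym2 W) ∧ v ∈ (f (k + 1) : Sym2 W) :=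
    (lineGraph_adj_iff_exists.1 (f.map_rel_iff.2
      (cycleGraph_adj.2 (Or.inr (add_sub_cancel_left k 1))))).2
  choose v hv using hshare
  refine even_of_forall_ne_add_one (n := n + 1) (fun k => c (v k)) ?_
  intro (k : Fin (n + 4)) hc
  -- two ends of the edge `f (k + 1)` of equal colour coincide, so `f k` meets `f (k + 2)`
  have hvv : v k = v (k + 1) := by
    by_contra hne
    exact c.valid (adj_iff_exists_edge.2 ⟨hne, _, (f (k + 1)).2, (hv k).2, (hv (k + 1)).1⟩) hc
  have hk₂ : k + 1 + 1 ≠ k := Fin.add_one_add_one_ne_self (n := n + 1) k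
  have hk₃ : k + 1 + 1 + 1 ≠ k := by
    rw [add_assoc, add_assoc, Ne, add_eq_left]
    simp [Fin.ext_iff, Fin.val_add, Nat.mod_eq_of_lt]
  have hk₁ : k + 1 + 1 ≠ k + 1 := by
    rw [add_assoc, Ne, add_right_inj]
    simp
  have hadj : (cycleGraph (n + 4)).Adj k (k + 1 + 1) := f.map_rel_iff.1 <|
    lineGraph_adj_iff_exists.2 ⟨f.injective.ne hk₂.symm, v k, (hv k).1, hvv ▸ (hv (k + 1)).2⟩
  rcases cycleGraph_adj.1 hadj with h | h <;> rw [sub_eq_iff_eq_add'] at h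
  exacts [hk₃ h.symm, hk₁ h]

end SimpleGraph

namespace BSP

open SimpleGraph Walk

variable {V V' W : Type*} {G : SimpleGraph V} {G' : SimpleGraph V'} {H : SimpleGraph W}

lemma IsInducedCycle.cycleGraph_isIndContained {u : V} {p : G.Walk u u}
    (hp : IsInducedCycle G p) : cycleGraph p.length ⊴ G := by
  obtain ⟨n, hn⟩ : ∃ n, p.length = n + 3 := ⟨p.length - 3, by have := hp.1.three_le_length; omega⟩
  rw [hn]
  refine ⟨⟨⟨fun k => p.getVert k, fun a b h =>
    Fin.ext (hp.1.getVert_injOn' (by simp; omega) (by simp; omega) h)⟩, ?_⟩⟩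
  intro i j
  rw [← hp.1.mem_edges_iff_cycleGraph_adj hn]
  exact ⟨hp.2 _ (p.getVert_mem_support _) _ (p.getVert_mem_support _), p.adj_of_mem_edges⟩

lemma IsInducedWalk.map {u v : V} {p : G.Walk u v} (hp : IsInducedWalk G p) (f : G ↪g G') :
    IsInducedWalk G' (p.map f.toHom) := by
  intro x hx y hy hxy
  rw [Walk.support_map, List.mem_map] at hx hy
  obtain ⟨a, ha, rfl⟩ := hx
  obtain ⟨b, hb, rfl⟩ := hy
  rw [edges_map]
  exact List.mem_map_of_mem (hp a ha b hb (f.map_rel_iff.1 hxy))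

lemma isInducedWalk_cycleGraph_cycle (n : ℕ) :
    IsInducedWalk (cycleGraph (n + 3)) (cycleGraph.cycle n) := by
  intro x _ y _ hxy
  have h := (cycleGraph.isCycle_cycle (n := n)).mem_edges_iff_cycleGraph_adj
    cycleGraph.length_cycle (-x) (-y)
  rw [cycleGraph.getVert_cycle_eq_neg, cycleGraph.getVert_cycle_eq_neg, neg_neg, neg_neg] at h
  refine h.2 ?_
  rw [cycleGraph_adj, neg_sub_neg, neg_sub_neg]
  exact (cycleGraph_adj.1 hxy).symm

theorem hasOddHole_iff_exists_cycleGraph_isIndContained :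
    HasOddHole G ↔ ∃ n, Odd n ∧ 5 ≤ n ∧ cycleGraph n ⊴ G := by
  constructor
  · rintro ⟨u, p, hp, hodd, h5⟩
    exact ⟨_, hodd, h5, hp.cycleGraph_isIndContained⟩
  · rintro ⟨n, hodd, h5, ⟨f⟩⟩
    obtain ⟨m, rfl⟩ : ∃ m, n = m + 3 := ⟨n - 3, by omega⟩
    refine ⟨_, (cycleGraph.cycle m).map f.toHom,
      ⟨(isCycle_map_iff_of_injective f.injective).2 cycleGraph.isCycle_cycle,
        (isInducedWalk_cycleGraph_cycle m).map f⟩, ?_, ?_⟩ <;>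
    rwa [length_map, cycleGraph.length_cycle]

lemma HasOddHole.map (h : HasOddHole G) (f : G ↪g G') : HasOddHole G' := by
  obtain ⟨n, hodd, h5, hn⟩ := hasOddHole_iff_exists_cycleGraph_isIndContained.1 h
  exact hasOddHole_iff_exists_cycleGraph_isIndContained.2 ⟨n, hodd, h5, hn.trans ⟨f⟩⟩

lemma ClawFree.comap (h : ClawFree G') (f : G ↪g G') : ClawFree G :=
  ⟨fun g => h.false (f.comp g)⟩

lemma DiamondFree.comap (h : DiamondFree G') (f : G ↪g G') : DiamondFree G :=
  ⟨fun g => h.false (f.comp g)⟩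

lemma ClawFree.adj_of_not_adj (hC : ClawFree G) {a b c d : V} (hab : G.Adj a b)
    (hac : G.Adj a c) (had : G.Adj a d) (hbc : b ≠ c) (hbd : b ≠ d) (hcd : c ≠ d)
    (nbc : ¬ G.Adj b c) (nbd : ¬ G.Adj b d) : G.Adj c d := by
  by_contra ncd
  refine hC.false ⟨⟨Sum.elim (fun _ => a) ![b, c, d], ?_⟩, ?_⟩
  · rintro (i | i) (j | j) hij <;> fin_cases i <;> fin_cases j <;>
      simp_all [hab.ne, hac.ne, had.ne, hab.ne', hac.ne', had.ne']
  · intro i j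
    change G.Adj (Sum.elim (fun _ => a) ![b, c, d] i) (Sum.elim (fun _ => a) ![b, c, d] j) ↔ _
    rcases i with i | i <;> rcases j with j | j <;> fin_cases i <;> fin_cases j <;>
      simp_all [claw, G.adj_comm]

lemma DiamondFree.adj_of_mem_commonNeighbors (hD : DiamondFree G) {a b c d : V}
    (hab : G.Adj a b) (hc : c ∈ G.commonNeighbors a b) (hd : d ∈ G.commonNeighbors a b)
    (hcd : c ≠ d) : G.Adj c d := by
  obtain ⟨hac, hbc⟩ := hc
  obtain ⟨had, hbd⟩ := hd
  by_contra hn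
  refine hD.false ⟨⟨![c, d, a, b], ?_⟩, ?_⟩
  · intro i j hij
    fin_cases i <;> fin_cases j <;> simp_all [hab.ne, hac.ne, had.ne, hbc.ne, hbd.ne]
  · intro i j
    change G.Adj (![c, d, a, b] i) (![c, d, a, b] j) ↔ diamond.Adj i j
    fin_cases i <;> fin_cases j <;> simp_all [diamond, G.adj_comm, eq_comm]

lemma clawFree_lineGraph (H : SimpleGraph W) : ClawFree H.lineGraph := by
  refine ⟨fun f => ?_⟩
  have hcentre (i : Fin 3) : ∃ v, v ∈ (f (.inl 0) : Sym2 W) ∧ v ∈ (f (.inr i) : Sym2 W) :=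
    (lineGraph_adj_iff_exists.1 (f.map_rel_iff.2 (by simp [claw]))).2
  choose v hv using hcentre
  have hleaves {i j : Fin 3} (hij : i ≠ j) : v i ≠ v j := fun h =>
    (by simp [claw] : ¬ claw.Adj (.inr i) (.inr j)) <| f.map_rel_iff.1 <|
      lineGraph_adj_iff_exists.2 ⟨f.injective.ne (by simpa using hij), v i, (hv i).2, h ▸ (hv j).2⟩
  rcases Sym2.eq_or_eq_or_eq_of_mem (hv 0).1 (hv 1).1 (hv 2).1 with h | h | h <;>
    exact hleaves (by decide) h

lemma diamondFree_lineGraph (hH : H.CliqueFree 3) : DiamondFree H.lineGraph := by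
  refine ⟨fun f => ?_⟩
  have hadj (i j : Fin 4) (h : diamond.Adj i j) := f.map_rel_iff.2 h
  have h₂₃ := hadj 2 3 (by simp [diamond])
  obtain ⟨a, ha₂, ha₃, ha₀⟩ := exists_mem_of_lineGraph_adj_of_adj_of_adj hH h₂₃
    (hadj 2 0 (by simp [diamond])) (hadj 3 0 (by simp [diamond]))
  obtain ⟨b, hb₂, hb₃, hb₁⟩ := exists_mem_of_lineGraph_adj_of_adj_of_adj hH h₂₃
    (hadj 2 1 (by simp [diamond])) (hadj 3 1 (by simp [diamond]))
  obtain rfl : a = b := by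
    by_contra hab
    exact h₂₃.ne (Subtype.ext (Sym2.eq_of_ne_mem hab ha₂ hb₂ ha₃ hb₃))
  have h₀₁ := f.map_rel_iff.1 (lineGraph_adj_iff_exists.2
    ⟨f.injective.ne (by decide : (0 : Fin 4) ≠ 1), a, ha₀, hb₁⟩)
  simp [diamond] at h₀₁

lemma not_hasOddHole_lineGraph (hH : H.Colorable 2) : ¬ HasOddHole H.lineGraph := by
  intro h
  obtain ⟨n, hodd, h5, ⟨f⟩⟩ := hasOddHole_iff_exists_cycleGraph_isIndContained.1 h
  obtain ⟨m, rfl⟩ : ∃ m, n = m + 4 := ⟨n - 4, by omega⟩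
  obtain ⟨c⟩ := hH
  exact Nat.not_even_iff_odd.2 hodd
    ((H.recolorOfEquiv finTwoEquiv c).even_of_cycleGraph_embedding_lineGraph f)

lemma colorable_two_of_not_hasOddHole_lineGraph (hH : H.CliqueFree 3)
    (h : ¬ HasOddHole H.lineGraph) : H.Colorable 2 := by
  refine two_colorable_iff_forall_loop_even.2 fun u w => Nat.not_odd_iff_even.1 fun hw => h ?_
  obtain ⟨v, c, hc, hodd⟩ := w.exists_isCycle_odd_length hw
  have h3 : c.length ≠ 3 := fun h3 =>
    let ⟨s, hs⟩ := is3Clique_iff_exists_cycle_length_three.2 ⟨v, c, hc, h3⟩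
    hH s hs
  obtain ⟨m, hm⟩ : ∃ m, c.length = m + 3 := ⟨c.length - 3, by have := hc.three_le_length; omega⟩
  have hC : cycleGraph (m + 3) ⊑ H := (cycleGraph_isContained_iff (by omega)).2 ⟨v, c, hc, hm⟩
  refine hasOddHole_iff_exists_cycleGraph_isIndContained.2 ⟨m + 3, hm ▸ hodd, ?_,
    (cycleGraph_isIndContained_lineGraph m).trans hC.isIndContained_lineGraph⟩
  obtain ⟨k, hk⟩ := hodd
  omega

variable (G) in
def edgeClique (x y : V) : Set V := insert x (insert y (G.commonNeighbors x y))

variable (G) in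
def edgeCliques : Set (Set V) := {K | ∃ x y, G.Adj x y ∧ K = edgeClique G x y}

lemma mem_edgeClique {x y w : V} :
    w ∈ edgeClique G x y ↔ w = x ∨ w = y ∨ (G.Adj x w ∧ G.Adj y w) := by
  simp [edgeClique, mem_commonNeighbors]

lemma left_mem_edgeClique {x y : V} : x ∈ edgeClique G x y := mem_edgeClique.2 (Or.inl rfl)

lemma right_mem_edgeClique {x y : V} : y ∈ edgeClique G x y :=
  mem_edgeClique.2 (Or.inr (Or.inl rfl))

lemma isClique_edgeClique (hD : DiamondFree G) {x y : V} (hxy : G.Adj x y) :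
    G.IsClique (edgeClique G x y) := by
  intro a ha b hb hab
  rcases mem_edgeClique.1 ha with rfl | rfl | ⟨hxa, hya⟩ <;>
    rcases mem_edgeClique.1 hb with rfl | rfl | ⟨hxb, hyb⟩
  all_goals first
    | exact absurd rfl hab
    | assumption
    | exact hxy.symm
    | exact Adj.symm ‹_›
    | exact hD.adj_of_mem_commonNeighbors hxy ⟨hxa, hya⟩ ⟨hxb, hyb⟩ hab

lemma mem_edgeClique_of_adj_of_adj (hD : DiamondFree G) {a b x y w : V} (hab : G.Adj a b)
    (hx : x ∈ edgeClique G a b) (hy : y ∈ edgeClique G a b) (hxy : x ≠ y) (hxw : G.Adj x w)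
    (hyw : G.Adj y w) : w ∈ edgeClique G a b := by
  have hK := isClique_edgeClique hD hab
  have hadj {z : V} (hz : z ∈ edgeClique G a b) (hzw : z ≠ w) : G.Adj z w := by
    by_cases hzx : z = x
    · exact hzx ▸ hxw
    by_cases hzy : z = y
    · exact hzy ▸ hyw
    exact hD.adj_of_mem_commonNeighbors (hK hx hy hxy)
      ⟨hK hx hz (Ne.symm hzx), hK hy hz (Ne.symm hzy)⟩ ⟨hxw, hyw⟩ hzw
  rw [mem_edgeClique]
  by_cases hwa : w = a
  · exact Or.inl hwa
  by_cases hwb : w = b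
  · exact Or.inr (Or.inl hwb)
  exact Or.inr (Or.inr ⟨hadj left_mem_edgeClique (Ne.symm hwa),
    hadj right_mem_edgeClique (Ne.symm hwb)⟩)

lemma eq_edgeClique_of_mem (hD : DiamondFree G) {K : Set V} (hK : K ∈ edgeCliques G) {x y : V}
    (hx : x ∈ K) (hy : y ∈ K) (hxy : x ≠ y) : K = edgeClique G x y := by
  obtain ⟨a, b, hab, rfl⟩ := hK
  have hK := isClique_edgeClique hD hab
  ext w
  constructor
  · intro hw
    rw [mem_edgeClique]
    by_cases hwx : w = x
    · exact Or.inl hwx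
    by_cases hwy : w = y
    · exact Or.inr (Or.inl hwy)
    exact Or.inr (Or.inr ⟨hK hx hw (Ne.symm hwx), hK hy hw (Ne.symm hwy)⟩)
  · rw [mem_edgeClique]
    rintro (rfl | rfl | ⟨hxw, hyw⟩)
    · exact hx
    · exact hy
    · exact mem_edgeClique_of_adj_of_adj hD hab hx hy hxy hxw hyw

lemma eq_of_mem_edgeCliques (hD : DiamondFree G) {K K' : Set V} (hK : K ∈ edgeCliques G)
    (hK' : K' ∈ edgeCliques G) {x y : V} (hx : x ∈ K) (hx' : x ∈ K') (hy : y ∈ K) (hy' : y ∈ K')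
    (hxy : x ≠ y) : K = K' :=
  (eq_edgeClique_of_mem hD hK hx hy hxy).trans (eq_edgeClique_of_mem hD hK' hx' hy' hxy).symm

lemma adj_of_mem_edgeCliques (hD : DiamondFree G) {K : Set V} (hK : K ∈ edgeCliques G) {x y : V}
    (hx : x ∈ K) (hy : y ∈ K) (hxy : x ≠ y) : G.Adj x y := by
  obtain ⟨a, b, hab, rfl⟩ := hK
  exact isClique_edgeClique hD hab hx hy hxy

lemma adj_iff_exists_mem_edgeCliques (hD : DiamondFree G) {x y : V} (hxy : x ≠ y) :
    G.Adj x y ↔ ∃ K ∈ edgeCliques G, x ∈ K ∧ y ∈ K :=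
  ⟨fun h => ⟨_, ⟨x, y, h, rfl⟩, left_mem_edgeClique, right_mem_edgeClique⟩,
    fun ⟨_, hK, hx, hy⟩ => adj_of_mem_edgeCliques hD hK hx hy hxy⟩

lemma exists_ne_mem_of_mem_edgeCliques {K : Set V} (hK : K ∈ edgeCliques G) (x : V) :
    ∃ y ∈ K, y ≠ x := by
  obtain ⟨a, b, hab, rfl⟩ := hK
  by_cases hax : a = x
  · exact ⟨b, right_mem_edgeClique, hax ▸ hab.ne'⟩
  · exact ⟨a, left_mem_edgeClique, hax⟩

lemma ne_and_not_adj_of_mem_edgeCliques (hD : DiamondFree G) {K K' : Set V}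
    (hK : K ∈ edgeCliques G) (hK' : K' ∈ edgeCliques G) (hne : K ≠ K') {x y y' : V} (hx : x ∈ K)
    (hx' : x ∈ K') (hy : y ∈ K) (hy' : y' ∈ K') (hyx : y ≠ x) (hy'x : y' ≠ x) :
    y ≠ y' ∧ ¬ G.Adj y y' := by
  refine ⟨fun h => hne (eq_of_mem_edgeCliques hD hK hK' hx hx' hy (h ▸ hy') hyx.symm), fun h => ?_⟩
  have hy'K : y' ∈ K := by
    rw [eq_edgeClique_of_mem hD hK hx hy hyx.symm, mem_edgeClique]
    exact Or.inr (Or.inr ⟨adj_of_mem_edgeCliques hD hK' hx' hy' hy'x.symm, h⟩)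
  exact hne (eq_of_mem_edgeCliques hD hK hK' hx hx' hy'K hy' hy'x.symm)

lemma eq_or_eq_or_eq_of_mem_edgeCliques (hC : ClawFree G) (hD : DiamondFree G)
    {K₁ K₂ K₃ : Set V} (hK₁ : K₁ ∈ edgeCliques G) (hK₂ : K₂ ∈ edgeCliques G)
    (hK₃ : K₃ ∈ edgeCliques G) {x : V} (hx₁ : x ∈ K₁) (hx₂ : x ∈ K₂) (hx₃ : x ∈ K₃) :
    K₁ = K₂ ∨ K₁ = K₃ ∨ K₂ = K₃ := by
  by_contra! ⟨h₁₂, h₁₃, h₂₃⟩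
  obtain ⟨y₁, hy₁, hy₁x⟩ := exists_ne_mem_of_mem_edgeCliques hK₁ x
  obtain ⟨y₂, hy₂, hy₂x⟩ := exists_ne_mem_of_mem_edgeCliques hK₂ x
  obtain ⟨y₃, hy₃, hy₃x⟩ := exists_ne_mem_of_mem_edgeCliques hK₃ x
  obtain ⟨n₁₂, a₁₂⟩ := ne_and_not_adj_of_mem_edgeCliques hD hK₁ hK₂ h₁₂ hx₁ hx₂ hy₁ hy₂ hy₁x hy₂x
  obtain ⟨n₁₃, a₁₃⟩ := ne_and_not_adj_of_mem_edgeCliques hD hK₁ hK₃ h₁₃ hx₁ hx₃ hy₁ hy₃ hy₁x hy₃x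
  obtain ⟨n₂₃, a₂₃⟩ := ne_and_not_adj_of_mem_edgeCliques hD hK₂ hK₃ h₂₃ hx₂ hx₃ hy₂ hy₃ hy₂x hy₃x
  exact a₂₃ (hC.adj_of_not_adj (adj_of_mem_edgeCliques hD hK₁ hx₁ hy₁ hy₁x.symm)
    (adj_of_mem_edgeCliques hD hK₂ hx₂ hy₂ hy₂x.symm)
    (adj_of_mem_edgeCliques hD hK₃ hx₃ hy₃ hy₃x.symm) n₁₂ n₁₃ n₂₃ a₁₂ a₁₃)

/-- The edge `e` of the root graph that represents the vertex `x`: its ends are the edge cliques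
containing `x`, padded with the private vertices `(x, false)`, `(x, true)` when there are fewer
than two of them. -/
structure IsRootEdge (G : SimpleGraph V) (x : V) (e : Sym2 (Set V ⊕ V × Bool)) : Prop where
  not_isDiag : ¬ e.IsDiag
  inl_mem_iff (K : Set V) : Sum.inl K ∈ e ↔ K ∈ edgeCliques G ∧ x ∈ K
  eq_of_inr_mem {v : V} {b : Bool} : Sum.inr (v, b) ∈ e → v = x

lemma exists_isRootEdge (hC : ClawFree G) (hD : DiamondFree G) (x : V) :
    ∃ e, IsRootEdge G x e := by
  by_cases h₂ : ∃ K₁ ∈ edgeCliques G, ∃ K₂ ∈ edgeCliques G, x ∈ K₁ ∧ x ∈ K₂ ∧ K₁ ≠ K₂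
  · obtain ⟨K₁, hK₁, K₂, hK₂, hx₁, hx₂, hne⟩ := h₂
    refine ⟨s(.inl K₁, .inl K₂), by simpa using hne, fun K => ?_, by simp⟩
    simp only [Sym2.mem_iff, Sum.inl.injEq]
    constructor
    · rintro (rfl | rfl)
      exacts [⟨hK₁, hx₁⟩, ⟨hK₂, hx₂⟩]
    · rintro ⟨hK, hx⟩
      rcases eq_or_eq_or_eq_of_mem_edgeCliques hC hD hK hK₁ hK₂ hx hx₁ hx₂ with h | h | h
      exacts [Or.inl h, Or.inr h, absurd h hne]
  by_cases h₁ : ∃ K ∈ edgeCliques G, x ∈ K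
  · obtain ⟨K₁, hK₁, hx₁⟩ := h₁
    refine ⟨s(.inl K₁, .inr (x, false)), by simp, fun K => ?_, by simp⟩
    simp only [Sym2.mem_iff, Sum.inl.injEq, reduceCtorEq, or_false]
    refine ⟨by rintro rfl; exact ⟨hK₁, hx₁⟩, fun ⟨hK, hx⟩ => ?_⟩
    by_contra hne
    exact h₂ ⟨K, hK, K₁, hK₁, hx, hx₁, hne⟩
  · refine ⟨s(.inr (x, false), .inr (x, true)), by simp, fun K => ?_, by simp⟩
    simpa using fun hK hx => h₁ ⟨K, hK, hx⟩

lemma IsRootEdge.exists_inl_of_mem_of_mem {x y : V} {e e' : Sym2 (Set V ⊕ V × Bool)}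
    (hx : IsRootEdge G x e) (hy : IsRootEdge G y e') (hxy : x ≠ y) {l : Set V ⊕ V × Bool}
    (hl : l ∈ e) (hl' : l ∈ e') : ∃ K, l = .inl K ∧ K ∈ edgeCliques G ∧ x ∈ K ∧ y ∈ K := by
  rcases l with K | ⟨v, b⟩
  · exact ⟨K, rfl, ((hx.inl_mem_iff K).1 hl).1, ((hx.inl_mem_iff K).1 hl).2,
      ((hy.inl_mem_iff K).1 hl').2⟩
  · exact absurd ((hx.eq_of_inr_mem hl).symm.trans (hy.eq_of_inr_mem hl')) hxy

lemma IsRootEdge.adj_iff (hD : DiamondFree G) {x y : V} {e e' : Sym2 (Set V ⊕ V × Bool)}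
    (hx : IsRootEdge G x e) (hy : IsRootEdge G y e') (hxy : x ≠ y) :
    G.Adj x y ↔ ∃ l, l ∈ e ∧ l ∈ e' := by
  rw [adj_iff_exists_mem_edgeCliques hD hxy]
  constructor
  · rintro ⟨K, hK, hxK, hyK⟩
    exact ⟨.inl K, (hx.inl_mem_iff K).2 ⟨hK, hxK⟩, (hy.inl_mem_iff K).2 ⟨hK, hyK⟩⟩
  · rintro ⟨l, hl, hl'⟩
    obtain ⟨K, -, hK, hxK, hyK⟩ := hx.exists_inl_of_mem_of_mem hy hxy hl hl'
    exact ⟨K, hK, hxK, hyK⟩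

lemma IsRootEdge.eq (hD : DiamondFree G) {x y : V} {e : Sym2 (Set V ⊕ V × Bool)}
    (hx : IsRootEdge G x e) (hy : IsRootEdge G y e) : x = y := by
  by_contra hxy
  induction e using Sym2.ind with
  | _ l₁ l₂ =>
  obtain ⟨K₁, rfl, hK₁, hx₁, hy₁⟩ :=
    hx.exists_inl_of_mem_of_mem hy hxy (Sym2.mem_mk_left _ _) (Sym2.mem_mk_left _ _)
  obtain ⟨K₂, rfl, hK₂, hx₂, hy₂⟩ :=
    hx.exists_inl_of_mem_of_mem hy hxy (Sym2.mem_mk_right _ _) (Sym2.mem_mk_right _ _)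
  exact hx.not_isDiag (by simp [eq_of_mem_edgeCliques hD hK₁ hK₂ hx₁ hx₂ hy₁ hy₂ hxy])

lemma cliqueFree_three_fromEdgeSet (hD : DiamondFree G) {f : V → Sym2 (Set V ⊕ V × Bool)}
    (hf : ∀ x, IsRootEdge G x (f x)) : (fromEdgeSet (Set.range f)).CliqueFree 3 := by
  classical
  intro s hs
  obtain ⟨l₁, l₂, l₃, h₁₂, h₁₃, h₂₃, rfl⟩ := is3Clique_iff.1 hs
  obtain ⟨⟨x, hx⟩, -⟩ := (fromEdgeSet_adj _).1 h₁₂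
  obtain ⟨⟨y, hy⟩, -⟩ := (fromEdgeSet_adj _).1 h₁₃
  obtain ⟨⟨z, hz⟩, -⟩ := (fromEdgeSet_adj _).1 h₂₃
  have hxy : x ≠ y := by rintro rfl; exact h₂₃.ne (Sym2.congr_right.1 (hx.symm.trans hy))
  have hxz : x ≠ z := by
    rintro rfl
    exact h₁₃.ne (Sym2.congr_left.1 (hx.symm.trans (hz.trans Sym2.eq_swap)))
  have hyz : y ≠ z := by rintro rfl; exact h₁₂.ne (Sym2.congr_left.1 (hy.symm.trans hz))
  obtain ⟨K₁, rfl, hK₁, hx₁, hy₁⟩ := (hf x).exists_inl_of_mem_of_mem (hf y) hxy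
    (hx ▸ Sym2.mem_mk_left _ _) (hy ▸ Sym2.mem_mk_left _ _)
  obtain ⟨K₂, rfl, hK₂, hx₂, hz₂⟩ := (hf x).exists_inl_of_mem_of_mem (hf z) hxz
    (hx ▸ Sym2.mem_mk_right _ _) (hz ▸ Sym2.mem_mk_left _ _)
  obtain ⟨K₃, -, hK₃, hy₃, hz₃⟩ := (hf y).exists_inl_of_mem_of_mem (hf z) hyz
    (hy ▸ Sym2.mem_mk_right _ _) (hz ▸ Sym2.mem_mk_right _ _)
  have hz₁ : z ∈ K₁ := by
    rw [eq_edgeClique_of_mem hD hK₁ hx₁ hy₁ hxy, mem_edgeClique]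
    exact Or.inr (Or.inr ⟨adj_of_mem_edgeCliques hD hK₂ hx₂ hz₂ hxz,
      adj_of_mem_edgeCliques hD hK₃ hy₃ hz₃ hyz⟩)
  exact h₁₂.ne (congrArg Sum.inl (eq_of_mem_edgeCliques hD hK₁ hK₂ hx₁ hx₂ hz₁ hz₂ hxz))

theorem isLineGraphOfBipartite_of_not_hasOddHole {V : Type u} {G : SimpleGraph V}
    (hO : ¬ HasOddHole G) (hC : ClawFree G) (hD : DiamondFree G) : IsLineGraphOfBipartite G := by
  choose f hf using exists_isRootEdge hC hD
  obtain ⟨e⟩ : Nonempty (G ≃g (fromEdgeSet (Set.range f)).lineGraph) :=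
    nonempty_iso_lineGraph_fromEdgeSet (fun x => (hf x).not_isDiag)
      (fun x y h => (hf x).eq hD (h ▸ hf y)) fun x y hxy => (hf x).adj_iff hD (hf y) hxy
  exact ⟨_, _, colorable_two_of_not_hasOddHole_lineGraph (cliqueFree_three_fromEdgeSet hD hf)
    (fun h => hO (h.map e.symm.toEmbedding)), ⟨e⟩⟩

end BSP

/-- Harary–Holzmann: `G` is the line graph of a bipartite graph iff `G` has
no odd hole, no induced claw and no induced diamond. -/
theorem line_graph_of_bipartite_characterization {V : Type u} (G : SimpleGraph V) :
    BSP.IsLineGraphOfBipartite G ↔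
      ¬ BSP.HasOddHole G ∧ BSP.ClawFree G ∧ BSP.DiamondFree G := by
  constructor
  · rintro ⟨W, H, hH, ⟨e⟩⟩
    exact ⟨fun h => BSP.not_hasOddHole_lineGraph hH (h.map e.toEmbedding),
      (BSP.clawFree_lineGraph H).comap e.toEmbedding,
      (BSP.diamondFree_lineGraph (hH.cliqueFree (by norm_num))).comap e.toEmbedding⟩
  · rintro ⟨hO, hC, hD⟩
    exact BSP.isLineGraphOfBipartite_of_not_hasOddHole hO hC hD
end

section
/- Let G be a bipartite graph. Then a partition (A,B) of V(G) is a skew partition of G if and only if it is a balanced skew partition of G. -/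
open SimpleGraph

universe u

/-!
In a bipartite graph two vertices with a common neighbour are joined only by even walks, and
since `Gᶜ[B]` is disconnected, any two vertices of `B` nonadjacent in `G` have a common
neighbour (in another component of `Gᶜ[B]`). This settles the paths with both ends in `B`.
An antipath of length at least 4 contains a triangle, so an odd antipath has length 3, and its
complement is an odd path between its two interior vertices, which lie in `B`.
-/

namespace SimpleGraph

variable {V : Type*} {G : SimpleGraph V}

lemma exists_not_reachable_of_not_connected (hG : ¬ G.Connected) (x : V) :
    ∃ y, ¬ G.Reachable x y := by
  by_contra! h
  exact hG (G.connected_iff_exists_forall_reachable.2 ⟨x, h⟩)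

lemma exists_adj_adj_of_not_connected_compl_induce {B : Set V}
    (hB : ¬ (Gᶜ.induce B).Connected) {x y : V} (hx : x ∈ B) (hy : y ∈ B)
    (hxy : ¬ G.Adj x y) : ∃ b ∈ B, G.Adj x b ∧ G.Adj y b := by
  obtain ⟨b, hb⟩ := exists_not_reachable_of_not_connected hB ⟨x, hx⟩
  have adj_of_not_reachable (z : B) (hz : ¬ (Gᶜ.induce B).Reachable z b) : G.Adj z b := by
    by_contra hzb
    have hne : (z : V) ≠ b := fun h => hz (Subtype.ext h ▸ Reachable.refl z)
    exact hz (Adj.reachable (by simpa [hne] using hzb))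
  have hxy' : (Gᶜ.induce B).Reachable ⟨x, hx⟩ ⟨y, hy⟩ := by
    by_cases hxy_eq : x = y
    · subst hxy_eq; rfl
    · exact Adj.reachable (by simpa [hxy_eq] using hxy)
  exact ⟨b, b.2, adj_of_not_reachable _ hb,
    adj_of_not_reachable _ fun h => hb (hxy'.trans h)⟩

lemma Walk.even_length_of_adj_of_adj (hG : G.Colorable 2) {x y b : V} (p : G.Walk x y)
    (hxb : G.Adj x b) (hyb : G.Adj y b) : Even p.length := by
  have := two_colorable_iff_forall_loop_even.1 hG x ((p.concat hyb).concat hxb.symm)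
  simpa [Nat.even_add_one] using this

lemma Colorable.not_adj_of_adj_of_adj (hG : G.Colorable 2) {a b c : V} (hab : G.Adj a b)
    (hbc : G.Adj b c) : ¬ G.Adj a c := fun hac => by
  simpa [Nat.even_add_one] using
    two_colorable_iff_forall_loop_even.1 hG a (.cons hab (.cons hbc (.cons hac.symm .nil)))

end SimpleGraph

namespace BSP

variable {V : Type*} {G : SimpleGraph V}

lemma IsInducedPath.not_adj_getVert {u v : V} {p : G.Walk u v} (hp : IsInducedPath G p)
    {i j : ℕ} (hij : i + 2 ≤ j) (hj : j ≤ p.length) : ¬ G.Adj (p.getVert i) (p.getVert j) := by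
  intro hadj
  obtain ⟨k, hk, he⟩ := (Walk.mk_mem_edges_iff_exists p).1
    (hp.2 _ (p.getVert_mem_support i) _ (p.getVert_mem_support j) hadj)
  have inj := hp.1.getVert_injOn
  rcases Sym2.eq_iff.1 he with ⟨h1, h2⟩ | ⟨h1, h2⟩
  · have hki := inj (show k ≤ p.length by omega) (show i ≤ p.length by omega) h1
    have hkj := inj (show k + 1 ≤ p.length by omega) hj h2
    omega
  · have hkj := inj (show k ≤ p.length by omega) hj h1
    have hki := inj (show k + 1 ≤ p.length by omega) (show i ≤ p.length by omega) h2
    omega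

lemma IsInducedPath.not_adj {u v : V} {p : G.Walk u v} (hp : IsInducedPath G p)
    (hp2 : 2 ≤ p.length) : ¬ G.Adj u v := by
  simpa using hp.not_adj_getVert (i := 0) hp2 le_rfl

lemma IsInducedPath.adj_getVert_of_compl {u v : V} {q : Gᶜ.Walk u v}
    (hq : IsInducedPath Gᶜ q) {i j : ℕ} (hij : i + 2 ≤ j) (hj : j ≤ q.length) :
    G.Adj (q.getVert i) (q.getVert j) := by
  have hne : q.getVert i ≠ q.getVert j := fun h =>
    absurd (hq.1.getVert_injOn (show i ≤ q.length by omega) hj h) (by omega)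
  simpa [hne] using hq.not_adj_getVert hij hj

lemma interior_getVert_of_isPath {u v : V} {p : G.Walk u v} (hp : p.IsPath) {i : ℕ}
    (hi0 : 0 < i) (hi : i < p.length) : Interior p (p.getVert i) := by
  refine ⟨p.getVert_mem_support i, fun h => ?_, fun h => ?_⟩
  · have := hp.getVert_injOn (show i ≤ p.length by omega) (Nat.zero_le _)
      (h.trans p.getVert_zero.symm)
    omega
  · have := hp.getVert_injOn (show i ≤ p.length by omega) (le_refl p.length)
      (h.trans p.getVert_length.symm)
    omega

variable {B : Set V}

lemma IsInducedPath.even_length_of_endpoints_mem (hG : G.Colorable 2)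
    (hB : ¬ (Gᶜ.induce B).Connected) {x y : V} {p : G.Walk x y} (hp : IsInducedPath G p)
    (hp2 : 2 ≤ p.length) (hx : x ∈ B) (hy : y ∈ B) : Even p.length := by
  obtain ⟨b, -, hxb, hyb⟩ :=
    exists_adj_adj_of_not_connected_compl_induce hB hx hy (hp.not_adj hp2)
  exact p.even_length_of_adj_of_adj hG hxb hyb

lemma IsInducedPath.even_length_compl_of_interior_mem (hG : G.Colorable 2)
    (hB : ¬ (Gᶜ.induce B).Connected) {x y : V} {q : Gᶜ.Walk x y} (hq : IsInducedPath Gᶜ q)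
    (hq2 : 2 ≤ q.length) (hint : ∀ z, Interior q z → z ∈ B) : Even q.length := by
  by_contra hodd
  rw [Nat.not_even_iff_odd] at hodd
  obtain h3 | h4 : q.length = 3 ∨ 4 ≤ q.length := by obtain ⟨k, hk⟩ := hodd; omega
  · have mem_B (i : ℕ) (hi0 : 0 < i) (hi : i < 3) : q.getVert i ∈ B :=
      hint _ (interior_getVert_of_isPath hq.1 hi0 (h3 ▸ hi))
    have hnadj : ¬ G.Adj (q.getVert 1) (q.getVert 2) :=
      ((compl_adj G _ _).1 (q.adj_getVert_succ (i := 1) (by omega))).2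
    obtain ⟨b, -, h1b, h2b⟩ := exists_adj_adj_of_not_connected_compl_induce hB
      (mem_B 1 (by omega) (by omega)) (mem_B 2 (by omega) (by omega)) hnadj
    have h13 := hq.adj_getVert_of_compl (i := 1) (j := 3) le_rfl h3.ge
    have h03 := hq.adj_getVert_of_compl (i := 0) (j := 3) (by omega) h3.ge
    have h02 := hq.adj_getVert_of_compl (i := 0) (j := 2) le_rfl (by omega)
    have even_three := Walk.even_length_of_adj_of_adj hG
      (.cons h13 (.cons h03.symm (.cons h02 .nil))) h1b h2b
    simp [Nat.even_add_one] at even_three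
  · exact hG.not_adj_of_adj_of_adj (hq.adj_getVert_of_compl (i := 0) (j := 2) le_rfl (by omega))
      (hq.adj_getVert_of_compl (i := 2) (j := 4) le_rfl h4)
      (hq.adj_getVert_of_compl (i := 0) (j := 4) (by omega) h4)

end BSP

/-- In a bipartite graph, a partition is a skew partition iff it is a balanced
skew partition. -/
theorem bipartite_skew_iff_balanced {V : Type*} (G : SimpleGraph V)
    (hbip : G.Colorable 2) (A B : Set V) :
    BSP.IsSkewPartition G A B ↔ BSP.IsBalancedSkewPartition G A B := by
  refine ⟨fun hskew => ⟨hskew, ?_, ?_⟩, fun hbal => hbal.1⟩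
  · intro x y p hp hp2 hx hy _
    exact hp.even_length_of_endpoints_mem hbip hskew.2.2.2.2.2 hp2 hx hy
  · intro x y q hq hq2 _ _ hint
    exact hq.even_length_compl_of_interior_mem hbip hskew.2.2.2.2.2 hq2 hint
end
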